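/- arXiv:1102.5072 — 2 statements merged into one kernel-verified Lean document; each statement's English description precedes it below -/
import Mathlib

section
/- Let R be an algebra over a field k, and let φ = [A₁ A₂] be a matrix with entries in R whose columns A₁ and A₂ are a×1 matrices. Suppose every polynomial of degree a in k[x] has a root in k, and every entry of A₂ lies in the k-vector space spanned by the entries of A₁. Then there exist an invertible a×a matrix χ over k and λ ∈ k such that at least one entry of χ(A₂ − λA₁) is zero. -/
/-!
Write `A₂ = M A₁` with `M` over `k`. A root `λ` of the characteristic polynomial of `M` yields a
nonzero left eigenvector `v`, and then `v (A₂ - λ A₁) = (v M - λ v) A₁ = 0`. Replacing row `i` of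
the identity by `v`, where `v i ≠ 0`, gives an invertible `χ` whose row `i` kills `A₂ - λ A₁`.
-/

open Matrix

theorem Matrix.exists_vecMul_eq_smul_of_isRoot_charpoly {K n : Type*} [CommRing K] [IsDomain K]
    [Fintype n] [DecidableEq n] (M : Matrix n n K) {l : K} (hl : M.charpoly.IsRoot l) :
    ∃ v ≠ 0, v ᵥ* M = l • v := by
  rw [Polynomial.IsRoot, eval_charpoly, ← exists_vecMul_eq_zero_iff] at hl
  obtain ⟨v, hv0, hv⟩ := hl
  refine ⟨v, hv0, ?_⟩
  rwa [vecMul_sub, scalar_apply, vecMul_diagonal_const, op_smul_eq_smul, sub_eq_zero,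
    eq_comm] at hv

theorem Matrix.det_one_updateRow {R n : Type*} [CommRing R] [Fintype n] [DecidableEq n]
    (i : n) (v : n → R) : ((1 : Matrix n n R).updateRow i v).det = v i := by
  rw [← cramer_transpose_apply, transpose_one, cramer_one, Module.End.one_apply]

theorem Matrix.exists_map_mulVec_eq_of_mem_span {k R m n : Type*} [CommSemiring k] [Semiring R]
    [Algebra k R] [Fintype n] {A₁ : n → R} {A₂ : m → R}
    (h : ∀ i, A₂ i ∈ Submodule.span k (Set.range A₁)) :
    ∃ M : Matrix m n k, M.map (algebraMap k R) *ᵥ A₁ = A₂ := by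
  choose M hM using fun i => (Submodule.mem_span_range_iff_exists_fun k).mp (h i)
  refine ⟨Matrix.of M, funext fun i => ?_⟩
  simp [← hM i, mulVec, dotProduct, Algebra.smul_def]

theorem Matrix.comp_dotProduct_map_mulVec_sub_eq_zero {k R n : Type*} [CommSemiring k]
    [CommRing R] [Fintype n] (f : k →+* R) {M : Matrix n n k} {v : n → k} {l : k}
    (hv : v ᵥ* M = l • v) (A : n → R) : (f ∘ v) ⬝ᵥ (M.map f *ᵥ A - f l • A) = 0 := by
  have hfv : (f ∘ v) ᵥ* M.map f = f l • (f ∘ v) := by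
    ext i
    rw [← RingHom.map_vecMul, hv, Pi.smul_apply, smul_eq_mul, map_mul]
    rfl
  rw [dotProduct_sub, dotProduct_mulVec, hfv, dotProduct_smul, smul_dotProduct, sub_self]

/-- Let `R` be an algebra over a field `k`, and let `A₁`, `A₂` be two column vectors of length `a`
with entries in `R`.  Suppose every polynomial of degree `a` in `k[x]` has a root in `k`, and
every entry of `A₂` lies in the `k`-vector space spanned by the entries of `A₁`.  Then there exist
an invertible `a×a` matrix `χ` over `k` and `λ ∈ k` such that at least one entry of
`χ(A₂ − λA₁)` is zero. -/
theorem stmt6 {k : Type*} [Field k] {R : Type*} [CommRing R] [Algebra k R]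
    (a : ℕ) (A₁ A₂ : Fin a → R)
    (hroot : ∀ p : Polynomial k, p.degree = (a : ℕ) → ∃ x : k, p.IsRoot x)
    (hspan : ∀ i, A₂ i ∈ Submodule.span k (Set.range A₁)) :
    ∃ (χ : Matrix (Fin a) (Fin a) k) (l : k), IsUnit χ ∧
      ∃ i : Fin a,
        ((χ.map (algebraMap k R)).mulVec (fun j => A₂ j - algebraMap k R l * A₁ j)) i = 0 := by
  obtain ⟨M, rfl⟩ := exists_map_mulVec_eq_of_mem_span hspan
  obtain ⟨l, hl⟩ := hroot M.charpoly (by rw [charpoly_degree_eq_dim, Fintype.card_fin])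
  obtain ⟨v, hv0, hv⟩ := M.exists_vecMul_eq_smul_of_isRoot_charpoly hl
  obtain ⟨i, hi⟩ := Function.ne_iff.mp hv0
  refine ⟨(1 : Matrix (Fin a) (Fin a) k).updateRow i v, l, ?_, i, ?_⟩
  · rw [isUnit_iff_isUnit_det, det_one_updateRow]
    exact hi.isUnit
  · rw [← comp_dotProduct_map_mulVec_sub_eq_zero (algebraMap k R) hv A₁, mulVec]
    congr 1
    ext j
    simp
end

section
/- Adopt the data of a birationally parameterized non-degenerate base-point-free curve C ⊆ ℙ^{n-1} of degree d over an algebraically closed field k, with Hilbert–Burch matrix φ for [g₁,…,g_n]. For a point p ∈ ℙ^{n-1}, the point p lies on C if and only if the generalized row ideal I₁(pφ) has height 1 in B = k[x,y]. -/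
open MvPolynomial

/-- The height of an ideal: the infimum of the heights of the primes containing it. -/
noncomputable def idealHeight {R : Type*} [CommRing R] (I : Ideal R) : ℕ∞ :=
  ⨅ (P : PrimeSpectrum R) (_ : I ≤ P.asIdeal), Order.height P

/-!
The generators `∑ᵢ pᵢ φᵢⱼ` of `I₁(pφ)` are forms. If `p = t • Ψ(q)`, they all vanish at `q`
because the columns of `φ` are syzygies of `g`, so `I₁(pφ)` lies in the principal prime ideal
of the line `k • q`, which has height one by Krull. Exactness puts the Koszul syzygies
`pᵢ gᵢ₀ - pᵢ₀ gᵢ` into `I₁(pφ)`; hence `I₁(pφ) ≠ 0`, as otherwise `(g)` would be principal and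
not of height two. Conversely, an ideal of height one in `k[x,y]` is not `(x,y)`-primary, so by
the Nullstellensatz `I₁(pφ)` has a common zero `q ≠ 0`. Since `(g)` has height two, some
`gᵢ₀(q) ≠ 0`, and evaluating the Koszul relations at `q` gives `p = t • Ψ(q)`.
-/

theorem idealHeight_eq_height {R : Type*} [CommRing R] (I : Ideal R) :
    idealHeight I = I.height := by
  refine le_antisymm ?_ (le_iInf₂ fun P hP => ?_)
  · rw [Ideal.height_eq_inf_minimalPrimes]
    refine le_iInf₂ fun P hP => ?_
    have := hP.1.1
    exact iInf₂_le_of_le (⟨P, this⟩ : PrimeSpectrum R) hP.1.2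
      (PrimeSpectrum.height_eq_orderHeight ⟨P, this⟩).ge
  · rw [← PrimeSpectrum.height_eq_orderHeight]
    exact Ideal.height_mono hP

theorem Ideal.height_span_singleton_ne_two {R : Type*} [CommRing R] [IsNoetherianRing R] (x : R) :
    (Ideal.span {x}).height ≠ 2 := by
  by_cases hx : IsUnit x
  · rw [Ideal.span_singleton_eq_top.mpr hx, Ideal.height_top]
    exact ENat.top_ne_natCast 2
  · exact ((Ideal.height_span_singleton_le_one hx).trans_lt (by norm_num)).ne

theorem MvPolynomial.IsHomogeneous.eval_smul {σ R : Type*} [Fintype σ] [CommSemiring R]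
    {f : MvPolynomial σ R} {m : ℕ} (hf : f.IsHomogeneous m) (s : R) (q : σ → R) :
    eval (s • q) f = s ^ m * eval q f := by
  simp only [eval_eq', Finset.mul_sum]
  refine Finset.sum_congr rfl fun e he => ?_
  have hm : ∑ i, e i = m := ((hf.degree_eq_sum_deg_support he).trans
    (Finset.sum_subset (Finset.subset_univ _) fun i _ hi => Finsupp.notMem_support_iff.mp hi)).symm
  simp only [Pi.smul_apply, smul_eq_mul, mul_pow, Finset.prod_mul_distrib,
    Finset.prod_pow_eq_pow_sum, hm]
  ring

namespace MvPolynomial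

variable {k : Type*} [Field k]

noncomputable def lineForm (q : Fin 2 → k) : MvPolynomial (Fin 2) k :=
  C (q 1) * X 0 - C (q 0) * X 1

theorem eval_lineForm (q v : Fin 2 → k) : eval v (lineForm q) = q 1 * v 0 - q 0 * v 1 := by
  simp [lineForm]

theorem exists_eq_smul_of_eval_lineForm_eq_zero {q v : Fin 2 → k} (hq : q ≠ 0)
    (hv : eval v (lineForm q) = 0) : ∃ t : k, v = t • q := by
  rw [eval_lineForm] at hv
  obtain ⟨i₀, hi₀⟩ := Function.ne_iff.mp hq
  refine ⟨v i₀ / q i₀, ?_⟩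
  ext i
  simp only [Pi.smul_apply, smul_eq_mul, Pi.zero_apply] at hi₀ ⊢
  field_simp
  fin_cases i₀ <;> fin_cases i <;> simp
  · linear_combination -hv
  · linear_combination hv

theorem lineForm_ne_zero {q : Fin 2 → k} (hq : q ≠ 0) : lineForm q ≠ 0 := by
  intro h
  have h₀ := congrArg (eval ![0, 1]) h
  have h₁ := congrArg (eval ![1, 0]) h
  simp only [eval_lineForm, map_zero] at h₀ h₁
  exact hq (by ext i; fin_cases i <;> simp_all)

theorem totalDegree_lineForm {q : Fin 2 → k} (hq : q ≠ 0) : (lineForm q).totalDegree = 1 :=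
  ((isHomogeneous_C_mul_X _ _).sub (isHomogeneous_C_mul_X _ _)).totalDegree (lineForm_ne_zero hq)

theorem prime_lineForm {q : Fin 2 → k} (hq : q ≠ 0) : Prime (lineForm q) := by
  refine (irreducible_of_totalDegree_eq_one (totalDegree_lineForm hq) fun r hr => ?_).prime
  refine Ne.isUnit fun hr0 => lineForm_ne_zero hq (MvPolynomial.ext _ _ fun e => ?_)
  simpa [hr0] using hr e


theorem mem_span_lineForm [IsAlgClosed k] {q : Fin 2 → k} (hq : q ≠ 0)
    {f : MvPolynomial (Fin 2) k} {m : ℕ} (hf : f.IsHomogeneous m) (hfq : eval q f = 0) :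
    f ∈ Ideal.span {lineForm q} := by
  have hprime := (Ideal.span_singleton_prime (lineForm_ne_zero hq)).mpr (prime_lineForm hq)
  rw [← hprime.radical, ← vanishingIdeal_zeroLocus_eq_radical (K := k)]
  intro v hv
  obtain ⟨t, rfl⟩ :=
    exists_eq_smul_of_eval_lineForm_eq_zero hq (hv _ (Ideal.mem_span_singleton_self _))
  change eval (t • q) f = 0
  rw [hf.eval_smul, hfq, mul_zero]

theorem height_span_lineForm_le_one {q : Fin 2 → k} (hq : q ≠ 0) :
    (Ideal.span {lineForm q}).height ≤ 1 :=
  Ideal.height_span_singleton_le_one (prime_lineForm hq).not_isUnit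

theorem two_le_height_of_X_mem {P : Ideal (MvPolynomial (Fin 2) k)} [P.IsPrime]
    (h₀ : X 0 ∈ P) (h₁ : X 1 ∈ P) : 2 ≤ P.height := by
  have hX₀ : Prime (X 0 : MvPolynomial (Fin 2) k) := X_prime
  have := (Ideal.span_singleton_prime hX₀.ne_zero).mpr hX₀
  have hlt : Ideal.span {X 0} < P := by
    refine lt_of_le_of_ne ((Ideal.span_singleton_le_iff_mem _).mpr h₀) fun h => ?_
    rw [← h, Ideal.mem_span_singleton, X_dvd_X] at h₁
    exact absurd h₁ (by decide)
  calc (2 : ℕ∞) = (Ideal.span {X 0}).height + 1 := by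
        rw [Ideal.height_span_singleton_eq_one_of_mem_nonZeroDivisors
          (mem_nonZeroDivisors_of_ne_zero hX₀.ne_zero) hX₀.not_isUnit]
        rfl
    _ ≤ P.height := Ideal.height_add_one_le_of_lt_of_isPrime hlt

theorem exists_ne_zero_forall_eval_eq_zero [IsAlgClosed k] {J : Ideal (MvPolynomial (Fin 2) k)}
    (hJ : J.height ≤ 1) : ∃ q : Fin 2 → k, q ≠ 0 ∧ ∀ f ∈ J, eval q f = 0 := by
  by_contra! hno
  have hX : ∀ i, X i ∈ J.radical := fun i => by
    rw [← vanishingIdeal_zeroLocus_eq_radical (K := k)]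
    intro v hv
    obtain rfl : v = 0 := by
      by_contra hv0
      obtain ⟨f, hfJ, hfv⟩ := hno v hv0
      exact hfv (hv f hfJ)
    simp
  have h2 : 2 ≤ J.height := by
    rw [Ideal.height_eq_inf_minimalPrimes]
    refine le_iInf₂ fun P hP => ?_
    have := hP.1.1
    exact two_le_height_of_X_mem (this.radical_le_iff.mpr hP.1.2 (hX 0))
      (this.radical_le_iff.mpr hP.1.2 (hX 1))
  exact absurd (h2.trans hJ) (by norm_num)

end MvPolynomial

theorem exists_ne_zero_eq_mul_of_mul_eq_mul {ι K : Type*} [Field K] {a b : ι → K} {i₀ : ι}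
    (ha : a ≠ 0) (hb : b i₀ ≠ 0) (h : ∀ i, a i * b i₀ = a i₀ * b i) :
    ∃ t, t ≠ 0 ∧ ∀ i, a i = t * b i := by
  refine ⟨a i₀ / b i₀, div_ne_zero (fun ha₀ => ha (funext fun i => ?_)) hb, fun i => ?_⟩
  · simpa [ha₀, hb] using h i
  · rw [div_mul_eq_mul_div, eq_div_iff hb, h]

namespace Matrix

variable {R A m n : Type*}

/-- The generalized row ideal `I₁(pφ)`. -/
noncomputable def rowIdeal [Semiring A] [SMul R A] [Fintype m] (φ : Matrix m n A) (p : m → R) :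
    Ideal A :=
  Ideal.span (Set.range fun j => ∑ i, p i • φ i j)

variable [CommRing A] [Fintype m] {g : m → A}

theorem mem_ker_mulVecLin_row_iff {w : m → A} :
    w ∈ LinearMap.ker (mulVecLin (of fun (_ : Fin 1) (i : m) => g i)) ↔
      g ⬝ᵥ w = 0 := by
  rw [LinearMap.mem_ker, funext_iff, Fin.forall_fin_one]
  rfl

variable [Fintype n] {φ : Matrix m n A}
  (hφ : LinearMap.range φ.mulVecLin = LinearMap.ker (mulVecLin (of fun (_ : Fin 1) (i : m) => g i)))
include hφ

theorem dotProduct_col_eq_zero_of_range_eq_ker [DecidableEq n] (j : n) : g ⬝ᵥ φ.col j = 0 := by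
  rw [← mem_ker_mulVecLin_row_iff, ← hφ, ← mulVec_single_one]
  exact LinearMap.mem_range_self _ _

variable [CommSemiring R] [Algebra R A]

theorem sum_smul_mem_rowIdeal (p : m → R) {w : m → A} (hw : g ⬝ᵥ w = 0) :
    ∑ i, p i • w i ∈ rowIdeal φ p := by
  obtain ⟨u, rfl⟩ : w ∈ LinearMap.range φ.mulVecLin := hφ ▸ mem_ker_mulVecLin_row_iff.mpr hw
  have : ∑ i, p i • φ.mulVec u i = ∑ j, (∑ i, p i • φ i j) * u j := by
    simp only [mulVec, dotProduct, Finset.smul_sum, Finset.sum_mul, smul_mul_assoc]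
    exact Finset.sum_comm
  rw [mulVecLin_apply, this]
  exact Ideal.sum_mem _ fun j _ => Ideal.mul_mem_right _ _ (Ideal.subset_span ⟨j, rfl⟩)

theorem smul_sub_smul_mem_rowIdeal [DecidableEq m] (p : m → R) (i i₀ : m) :
    p i • g i₀ - p i₀ • g i ∈ rowIdeal φ p := by
  have hw : g ⬝ᵥ (Pi.single i (g i₀) - Pi.single i₀ (g i)) = 0 := by
    rw [dotProduct_sub, dotProduct_single, dotProduct_single, mul_comm, sub_self]
  simpa [Pi.single_apply, smul_sub, Finset.sum_sub_distrib] using sum_smul_mem_rowIdeal hφ p hw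

theorem span_range_eq_span_singleton_of_rowIdeal_eq_bot {K : Type*} [Field K] [Algebra K A]
    {p : m → K} {i₀ : m} (hp : p i₀ ≠ 0) (hbot : rowIdeal φ p = ⊥) :
    Ideal.span (Set.range g) = Ideal.span {g i₀} := by
  classical
  refine le_antisymm (Ideal.span_le.mpr ?_) (Ideal.span_mono (by simp))
  rintro _ ⟨i, rfl⟩
  have hrel := smul_sub_smul_mem_rowIdeal hφ p i i₀
  rw [hbot, Ideal.mem_bot, sub_eq_zero] at hrel
  have : g i = ((p i₀)⁻¹ * p i) • g i₀ := by rw [mul_smul, hrel, inv_smul_smul₀ hp]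
  rw [SetLike.mem_coe, this, Algebra.smul_def]
  exact Ideal.mul_mem_left _ _ (Ideal.mem_span_singleton_self _)

end Matrix

section Curve

variable {k m n : Type*} [Field k] [IsAlgClosed k] {g : m → MvPolynomial (Fin 2) k}

theorem exists_eval_ne_zero_of_height_span_eq_two {d : ℕ} (hg : ∀ i, (g i).IsHomogeneous d)
    (hht : (Ideal.span (Set.range g)).height = 2) {q : Fin 2 → k} (hq : q ≠ 0) :
    ∃ i, eval q (g i) ≠ 0 := by
  by_contra! hgq
  have hle : Ideal.span (Set.range g) ≤ Ideal.span {lineForm q} :=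
    Ideal.span_le.mpr (Set.range_subset_iff.mpr fun i => mem_span_lineForm hq (hg i) (hgq i))
  have := (Ideal.height_mono hle).trans (height_span_lineForm_le_one hq)
  rw [hht] at this
  exact absurd this (by norm_num)

theorem rowIdeal_le_span_lineForm [Fintype m] [Fintype n]
    {φ : Matrix m n (MvPolynomial (Fin 2) k)}
    (hφ : LinearMap.range φ.mulVecLin =
      LinearMap.ker (Matrix.mulVecLin (Matrix.of fun (_ : Fin 1) (i : m) => g i)))
    (hφhom : ∀ j, ∃ dj : ℕ, ∀ i, (φ i j).IsHomogeneous dj)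
    {p : m → k} {q : Fin 2 → k} (hq : q ≠ 0) {t : k} (hpt : ∀ i, p i = t * eval q (g i)) :
    Matrix.rowIdeal φ p ≤ Ideal.span {lineForm q} := by
  classical
  refine Ideal.span_le.mpr (Set.range_subset_iff.mpr fun j => ?_)
  obtain ⟨dj, hdj⟩ := hφhom j
  refine mem_span_lineForm hq (Submodule.sum_mem (homogeneousSubmodule _ _ dj)
    fun i _ => Submodule.smul_mem _ _ (hdj i)) ?_
  have hcol := congrArg (eval q) (Matrix.dotProduct_col_eq_zero_of_range_eq_ker hφ j)
  simp only [dotProduct, Matrix.col_apply, map_sum, map_mul, map_zero] at hcol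
  simp only [map_sum, smul_eval, hpt, mul_assoc, ← Finset.mul_sum, hcol, mul_zero]

end Curve

theorem stmt17_general {k : Type*} [Field k] [IsAlgClosed k] (n d : ℕ)
    (g : Fin n → MvPolynomial (Fin 2) k) (hg : ∀ i, (g i).IsHomogeneous d)
    (hht : idealHeight (Ideal.span (Set.range g)) = 2)
    (φ : Matrix (Fin n) (Fin (n - 1)) (MvPolynomial (Fin 2) k))
    (hHBexact : LinearMap.range φ.mulVecLin =
      LinearMap.ker (Matrix.mulVecLin (Matrix.of fun (_ : Fin 1) (i : Fin n) => g i)))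
    (hφhom : ∀ j : Fin (n - 1), ∃ dj : ℕ, ∀ i : Fin n, (φ i j).IsHomogeneous dj)
    (p : Fin n → k) (hp : p ≠ 0) :
    ((∃ q : Fin 2 → k, q ≠ 0 ∧ ∃ t : k, t ≠ 0 ∧ ∀ i, p i = t * eval q (g i)) ↔
      idealHeight (Ideal.span
        (Set.range fun j : Fin (n - 1) => ∑ i : Fin n, p i • φ i j)) = 1) := by
  rw [idealHeight_eq_height] at hht ⊢
  change _ ↔ (Matrix.rowIdeal φ p).height = 1
  constructor
  · rintro ⟨q, hq, t, -, hpt⟩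
    obtain ⟨i₀, hi₀⟩ := Function.ne_iff.mp hp
    have hne : Matrix.rowIdeal φ p ≠ ⊥ := fun hbot => Ideal.height_span_singleton_ne_two (g i₀)
      (Matrix.span_range_eq_span_singleton_of_rowIdeal_eq_bot hHBexact hi₀ hbot ▸ hht)
    refine le_antisymm ?_ (Order.one_le_iff_ne_zero.mpr (mt Ideal.height_eq_zero_iff_eq_bot.mp hne))
    exact (Ideal.height_mono (rowIdeal_le_span_lineForm hHBexact hφhom hq hpt)).trans
      (height_span_lineForm_le_one hq)
  · intro h1
    obtain ⟨q, hq, hJq⟩ := exists_ne_zero_forall_eval_eq_zero h1.le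
    obtain ⟨i₀, hi₀⟩ := exists_eval_ne_zero_of_height_span_eq_two hg hht hq
    refine ⟨q, hq, exists_ne_zero_eq_mul_of_mul_eq_mul hp hi₀ fun i => ?_⟩
    have := hJq _ (Matrix.smul_sub_smul_mem_rowIdeal hHBexact p i i₀)
    rwa [map_sub, smul_eval, smul_eval, sub_eq_zero] at this

/-- Adopt the data of a birationally parameterized non-degenerate base-point-free curve
`C ⊆ ℙ^{n-1}` of degree `d` over an algebraically closed field `k`: forms `g₁, …, g_n` of degree
`d` in `B = k[x,y]` which minimally generate a height-two ideal, such that the induced morphism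
`Ψ : ℙ¹ → ℙ^{n-1}`, `q ↦ [g₁(q):⋯:g_n(q)]`, is birational onto its image (equivalently
`k[g₁,…,g_n]` and the Veronese `k[B_d]` have the same quotient field); let `φ` be a homogeneous
Hilbert–Burch matrix for `[g₁, …, g_n]`.  For a point `p ∈ ℙ^{n-1}`, the point `p` lies on `C`
(i.e. is in the image of `Ψ`) if and only if the generalized row ideal `I₁(pφ)` has height `1`
in `B`. -/
theorem stmt17 {k : Type*} [Field k] [IsAlgClosed k] (n d : ℕ) (hd : 0 < d)
    (g : Fin n → MvPolynomial (Fin 2) k) (hg : ∀ i, (g i).IsHomogeneous d)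
    (hmin : LinearIndependent k g)
    (hht : idealHeight (Ideal.span (Set.range g)) = 2)
    (hbir : ∀ v ∈ Algebra.adjoin k {f : MvPolynomial (Fin 2) k | f.IsHomogeneous d},
      ∃ a ∈ Algebra.adjoin k (Set.range g), ∃ b ∈ Algebra.adjoin k (Set.range g),
        b ≠ 0 ∧ b * v = a)
    (φ : Matrix (Fin n) (Fin (n - 1)) (MvPolynomial (Fin 2) k))
    (hHBinj : Function.Injective φ.mulVecLin)
    (hHBexact : LinearMap.range φ.mulVecLin =
      LinearMap.ker (Matrix.mulVecLin (Matrix.of fun (_ : Fin 1) (i : Fin n) => g i)))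
    (hφhom : ∀ j : Fin (n - 1), ∃ dj : ℕ, ∀ i : Fin n, (φ i j).IsHomogeneous dj)
    (p : Fin n → k) (hp : p ≠ 0) :
    ((∃ q : Fin 2 → k, q ≠ 0 ∧ ∃ t : k, t ≠ 0 ∧ ∀ i, p i = t * eval q (g i)) ↔
      idealHeight (Ideal.span
        (Set.range fun j : Fin (n - 1) => ∑ i : Fin n, p i • φ i j)) = 1) :=
  stmt17_general n d g hg hht φ hHBexact hφhom p hp
end
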